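/- For integers r ≥ d ≥ 2, writing ρ for the remainder of r upon division by d, β_r(d) ≥ (⌊r/d⌋+1)^{d−ρ}·(⌊r/d⌋+2)^{ρ}. Consequently β_r(d) > (r/d)^d, and if d ≥ r/2 then β_r(d) ≥ (3/2)^r·(4/3)^d. -/

import Mathlib

/-- A subset `C` of `F_2^r` is `d`-complete if through every point `v` there is a
`d`-flat contained in `C ∪ {v}`; i.e. there is a `d`-dimensional subspace `L`
with `v + (L \ {0}) ⊆ C`. -/
def KakeyaComplete (r d : ℕ) (C : Set (Fin r → ZMod 2)) : Prop :=
  ∀ v : Fin r → ZMod 2, ∃ L : Submodule (ZMod 2) (Fin r → ZMod 2),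
    Module.finrank (ZMod 2) L = d ∧ ∀ x ∈ L, x ≠ 0 → v + x ∈ C

/-- `gamma r d` is the smallest size of a `d`-complete subset of `F_2^r`. -/
noncomputable def gamma (r d : ℕ) : ℕ :=
  sInf {n | ∃ C : Finset (Fin r → ZMod 2), C.card = n ∧ KakeyaComplete r d ↑C}

/-- A subset `B` of `F_2^r` is `d`-non-blocking if for every `v` there is a
subspace `L` of dimension `r - d` (codimension `d`) with `(v + (L \ {0})) ∩ B = ∅`. -/
def KakeyaNonBlocking (r d : ℕ) (B : Set (Fin r → ZMod 2)) : Prop :=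
  ∀ v : Fin r → ZMod 2, ∃ L : Submodule (ZMod 2) (Fin r → ZMod 2),
    Module.finrank (ZMod 2) L = r - d ∧ ∀ x ∈ L, x ≠ 0 → v + x ∉ B

/-- `beta r d` is the largest size of a `d`-non-blocking subset of `F_2^r`. -/
noncomputable def beta (r d : ℕ) : ℕ :=
  sSup {n | ∃ B : Finset (Fin r → ZMod 2), B.card = n ∧ KakeyaNonBlocking r d ↑B}

/-! Split the `r` coordinates into `d` blocks and let `B` be the set of vectors with at most one
nonzero coordinate in each block; choosing for every block either nothing or one of its
coordinates shows `|B| = ∏ (|block| + 1)`. For the flat through `v` we take the kernel of a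
surjection `x ↦ (∑ i ∈ A k, x i)ₖ` onto `F_2^d`, built from disjoint nonempty sets `A k`.
If `v ∉ B`, it is nonzero at two coordinates of one block; taking the `A k` to be singletons that
include these two, every `v + x` with `x` in the kernel is still nonzero there. If `v ∈ B`, let
`A k` be the support of `v` in block `k` when that is nonempty and the whole block otherwise:
then in any block where a nonzero `x` of the kernel is nonzero, `v + x` has two nonzero
coordinates. With blocks of sizes `⌊r/d⌋` and `⌊r/d⌋ + 1` the product is the bound. -/

open Finset Function Module

section BlockSum

variable (K : Type*) {ι κ : Type*} [Field K]

def blockSum (A : κ → Finset ι) : (ι → K) →ₗ[K] (κ → K) :=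
  LinearMap.pi fun k => ∑ i ∈ A k, LinearMap.proj i

variable {K}

@[simp]
lemma blockSum_apply (A : κ → Finset ι) (x : ι → K) (k : κ) :
    blockSum K A x k = ∑ i ∈ A k, x i := by
  simp [blockSum]

lemma blockSum_surjective [Fintype κ] {A : κ → Finset ι}
    (hdisj : Pairwise (Disjoint on A)) (hne : ∀ k, (A k).Nonempty) :
    Surjective (blockSum K A) := by
  classical
  choose w hw using hne
  have hwA : ∀ k l, w l ∈ A k ↔ l = k := fun k l =>
    ⟨fun h => by_contra fun hlk => disjoint_left.1 (hdisj hlk) (hw l) h, fun h => h ▸ hw l⟩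
  intro y
  refine ⟨∑ l, Pi.single (w l) (y l), funext fun k => ?_⟩
  simp only [blockSum_apply, Finset.sum_apply, Pi.single_apply]
  rw [Finset.sum_comm]
  simp [Finset.sum_ite_eq', hwA]

lemma finrank_ker_blockSum [Fintype ι] [Fintype κ] {A : κ → Finset ι}
    (hdisj : Pairwise (Disjoint on A)) (hne : ∀ k, (A k).Nonempty) :
    finrank K (LinearMap.ker (blockSum K A)) = Fintype.card ι - Fintype.card κ := by
  classical
  have h := LinearMap.finrank_range_add_finrank_ker (blockSum K A)
  rw [LinearMap.range_eq_top.2 (blockSum_surjective hdisj hne), finrank_top] at h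
  simp only [Module.finrank_fintype_fun_eq_card] at h
  omega

end BlockSum

section Blocks

variable {K ι κ : Type*}

def atMostOnePerBlock [Zero K] (b : ι → κ) : Set (ι → K) :=
  {w | ∀ i j, b i = b j → w i ≠ 0 → w j ≠ 0 → i = j}

lemma notMem_atMostOnePerBlock [Zero K] {b : ι → κ} {w : ι → K} {i j : ι} (hij : i ≠ j)
    (hb : b i = b j) (hi : w i ≠ 0) (hj : w j ≠ 0) : w ∉ atMostOnePerBlock b :=
  fun hw => hij (hw i j hb hi hj)

variable [DecidableEq ι] [Zero K] [One K]

def indicatorOfChoice (b : ι → κ) (c : ∀ k, Option {i // b i = k}) : ι → K :=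
  fun i => if (c (b i)).map Subtype.val = some i then 1 else 0

variable [NeZero (1 : K)] {b : ι → κ}

lemma indicatorOfChoice_ne_zero_iff (c : ∀ k, Option {i // b i = k}) (i : ι) :
    indicatorOfChoice (K := K) b c i ≠ 0 ↔ (c (b i)).map Subtype.val = some i := by
  unfold indicatorOfChoice
  split_ifs with h <;> simp only [h, ne_eq, one_ne_zero, not_false_eq_true, not_true_eq_false]

lemma indicatorOfChoice_mem (c : ∀ k, Option {i // b i = k}) :
    indicatorOfChoice (K := K) b c ∈ atMostOnePerBlock b := by
  intro i j hij hi hj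
  rw [indicatorOfChoice_ne_zero_iff] at hi hj
  rw [hij, hj] at hi
  exact (Option.some.inj hi).symm

lemma indicatorOfChoice_injective : Injective (indicatorOfChoice (K := K) b) := by
  have key : ∀ c c' : ∀ k, Option {i // b i = k}, indicatorOfChoice (K := K) b c =
      indicatorOfChoice b c' → ∀ k i, (c k).map Subtype.val = some i →
        (c' k).map Subtype.val = some i := by
    intro c c' h k i hi
    obtain ⟨⟨j, rfl⟩, -, rfl⟩ := Option.map_eq_some_iff.1 hi
    rw [← indicatorOfChoice_ne_zero_iff (K := K), ← h, indicatorOfChoice_ne_zero_iff]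
    exact hi
  intro c c' h
  funext k
  apply Option.map_injective Subtype.val_injective
  ext i
  exact ⟨key c c' h k i, key c' c h.symm k i⟩

lemma card_image_indicatorOfChoice [Fintype ι] [Fintype κ] [DecidableEq κ] [DecidableEq K] :
    #(univ.image (indicatorOfChoice (K := K) b)) = ∏ k, (Fintype.card {i // b i = k} + 1) := by
  rw [card_image_of_injective _ indicatorOfChoice_injective, card_univ, Fintype.card_pi]
  simp only [Fintype.card_option]

end Blocks

section NonBlocking

variable {K ι κ : Type*} [Field K] [Fintype ι] {b : ι → κ} {v : ι → K}

lemma exists_blockSum_ker_avoid_of_notMem [Fintype κ] (hv : v ∉ atMostOnePerBlock b)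
    (hκ : 2 ≤ Fintype.card κ) (hκι : Fintype.card κ ≤ Fintype.card ι) :
    ∃ A : κ → Finset ι, Pairwise (Disjoint on A) ∧ (∀ k, (A k).Nonempty) ∧
      ∀ x ∈ LinearMap.ker (blockSum K A), v + x ∉ atMostOnePerBlock b := by
  classical
  simp only [atMostOnePerBlock, Set.mem_ofPred_eq, not_forall] at hv
  obtain ⟨i, j, hb, hi, hj, hij⟩ := hv
  obtain ⟨S, hijS, -, hS⟩ := exists_subsuperset_card_eq (subset_univ {i, j})
    (card_pair hij ▸ hκ) (by rwa [card_univ])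
  let e : κ ≃ S := Fintype.equivOfCardEq (by rw [Fintype.card_coe, hS])
  refine ⟨fun k => {(e k : ι)}, fun k l hkl => ?_, fun k => singleton_nonempty _, fun x hx => ?_⟩
  · simpa using Subtype.val_injective.ne (e.injective.ne hkl)
  have hxS : ∀ s ∈ S, x s = 0 := fun s hs => by
    simpa using congrFun (LinearMap.mem_ker.1 hx) (e.symm ⟨s, hs⟩)
  exact notMem_atMostOnePerBlock hij hb (by simpa [hxS i (hijS (by simp))])
    (by simpa [hxS j (hijS (by simp))])

lemma exists_blockSum_ker_avoid_of_mem (hb : Surjective b) (hv : v ∈ atMostOnePerBlock b) :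
    ∃ A : κ → Finset ι, Pairwise (Disjoint on A) ∧ (∀ k, (A k).Nonempty) ∧
      ∀ x ∈ LinearMap.ker (blockSum K A), x ≠ 0 → v + x ∉ atMostOnePerBlock b := by
  classical
  let A : κ → Finset ι := fun k =>
    if h : ∃ i, b i = k ∧ v i ≠ 0 then {h.choose} else ({i | b i = k} : Finset ι)
  have hA : ∀ k, ∀ i ∈ A k, b i = k := by
    intro k i hi
    by_cases h : ∃ i, b i = k ∧ v i ≠ 0
    · simp only [A, h, dite_true, mem_singleton] at hi
      exact hi ▸ h.choose_spec.1
    · simpa [A, h] using hi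
  refine ⟨A, fun k l hkl => disjoint_left.2 fun i hik hil =>
    hkl ((hA k i hik).symm.trans (hA l i hil)), fun k => ?_, fun x hx hx0 => ?_⟩
  · by_cases h : ∃ i, b i = k ∧ v i ≠ 0
    · simp [A, h]
    · obtain ⟨i, rfl⟩ := hb k
      exact ⟨i, by simp [A, h]⟩
  obtain ⟨i₀, hi₀⟩ : ∃ i, x i ≠ 0 := Function.ne_iff.1 hx0
  have hsum : ∑ i ∈ A (b i₀), x i = 0 := by
    simpa using congrFun (LinearMap.mem_ker.1 hx) (b i₀)
  by_cases h : ∃ i, b i = b i₀ ∧ v i ≠ 0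
  · obtain ⟨hb₁, hv₁⟩ := h.choose_spec
    have hx₁ : x h.choose = 0 := by simpa [A, h] using hsum
    have hne : i₀ ≠ h.choose := fun h' => hi₀ (h' ▸ hx₁)
    have hv₀ : v i₀ = 0 := by
      by_contra h'
      exact hne (hv _ _ hb₁.symm h' hv₁)
    exact notMem_atMostOnePerBlock hne hb₁.symm (by simpa [hv₀]) (by simpa [hx₁])
  · have hi₀A : i₀ ∈ A (b i₀) := by simp [A, h]
    push Not at h
    obtain ⟨i₂, hi₂A, hi₂, hx₂⟩ : ∃ i₂ ∈ A (b i₀), i₂ ≠ i₀ ∧ x i₂ ≠ 0 := by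
      by_contra! hc
      exact hi₀ (by rwa [sum_eq_single_of_mem i₀ hi₀A hc] at hsum)
    have hb₂ := hA _ _ hi₂A
    exact notMem_atMostOnePerBlock hi₂ hb₂ (by simpa [h i₂ hb₂]) (by simpa [h i₀ rfl])

end NonBlocking

section Kakeya

variable {r d : ℕ}

lemma KakeyaNonBlocking.mono {B B' : Set (Fin r → ZMod 2)} (h : B' ⊆ B)
    (hB : KakeyaNonBlocking r d B) : KakeyaNonBlocking r d B' :=
  fun v => (hB v).imp fun _ hL => ⟨hL.1, fun x hx hx0 hmem => hL.2 x hx hx0 (h hmem)⟩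

lemma card_le_beta {B : Finset (Fin r → ZMod 2)} (hB : KakeyaNonBlocking r d B) :
    #B ≤ beta r d :=
  le_csSup ⟨Fintype.card (Fin r → ZMod 2), by rintro n ⟨C, rfl, -⟩; exact card_le_univ C⟩
    ⟨B, rfl, hB⟩

lemma kakeyaNonBlocking_atMostOnePerBlock {κ : Type*} [Fintype κ] {b : Fin r → κ}
    (hb : Surjective b) (hκ : 2 ≤ Fintype.card κ) :
    KakeyaNonBlocking r (Fintype.card κ) (atMostOnePerBlock b) := by
  intro v
  by_cases hv : v ∈ atMostOnePerBlock b
  · obtain ⟨A, hdisj, hne, hA⟩ := exists_blockSum_ker_avoid_of_mem hb hv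
    exact ⟨_, by simpa using finrank_ker_blockSum hdisj hne, hA⟩
  · obtain ⟨A, hdisj, hne, hA⟩ := exists_blockSum_ker_avoid_of_notMem hv hκ
      (by simpa using Fintype.card_le_of_surjective b hb)
    exact ⟨_, by simpa using finrank_ker_blockSum hdisj hne, fun x hx _ => hA x hx⟩

lemma prod_card_fiber_add_one_le_beta {κ : Type*} [Fintype κ] [DecidableEq κ] {b : Fin r → κ}
    (hb : Surjective b) (hκ : 2 ≤ Fintype.card κ) :
    ∏ k, (Fintype.card {i // b i = k} + 1) ≤ beta r (Fintype.card κ) := by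
  rw [← card_image_indicatorOfChoice (K := ZMod 2)]
  refine card_le_beta ((kakeyaNonBlocking_atMostOnePerBlock hb hκ).mono ?_)
  intro w hw
  obtain ⟨c, -, rfl⟩ := mem_image.1 hw
  exact indicatorOfChoice_mem c

end Kakeya

section Numerics

variable {r d : ℕ}

lemma surjective_finOfNat [NeZero d] (hdr : d ≤ r) : Surjective fun i : Fin r => Fin.ofNat d i :=
  fun k => ⟨⟨k, k.2.trans_le hdr⟩, Fin.ext (Nat.mod_eq_of_lt k.2)⟩

lemma card_fiber_finOfNat [NeZero d] (k : Fin d) :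
    Fintype.card {i : Fin r // Fin.ofNat d i = k} = r / d + if (k : ℕ) < r % d then 1 else 0 := by
  have hk : ∀ n : ℕ, Fin.ofNat d n = k ↔ n ≡ k [MOD d] := by
    simp [Fin.ext_iff, Nat.ModEq, Nat.mod_eq_of_lt k.2]
  rw [← Nat.mod_eq_of_lt k.2, ← Nat.count_modEq_card r (NeZero.pos d),
    Nat.count_eq_card_fintype, Fintype.card_eq_nat_card, Fintype.card_eq_nat_card]
  exact Nat.card_congr
    { toFun := fun i => ⟨i.1, i.1.2, (hk _).1 i.2⟩
      invFun := fun n => ⟨⟨n.1, n.2.1⟩, (hk _).2 n.2.2⟩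
      left_inv := fun _ => rfl
      right_inv := fun _ => rfl }

lemma prod_fin_ite_lt {M : Type*} [CommMonoid M] {m n : ℕ} (hmn : m ≤ n) (a c : M) :
    ∏ k : Fin n, (if (k : ℕ) < m then a else c) = a ^ m * c ^ (n - m) := by
  have h := card_filter_add_card_filter_not (s := (univ : Finset (Fin n))) (fun k => (k : ℕ) < m)
  rw [Fin.card_filter_val_lt, card_univ, Fintype.card_fin, min_eq_right hmn] at h
  rw [prod_ite, prod_const, prod_const, Fin.card_filter_val_lt, min_eq_right hmn,
    show #{k : Fin n | ¬(k : ℕ) < m} = n - m by omega]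

lemma prod_card_fiber_finOfNat [NeZero d] :
    ∏ k : Fin d, (Fintype.card {i : Fin r // Fin.ofNat d i = k} + 1) =
      (r / d + 1) ^ (d - r % d) * (r / d + 2) ^ (r % d) := by
  have h : ∀ k : Fin d, r / d + (if (k : ℕ) < r % d then 1 else 0) + 1 =
      if (k : ℕ) < r % d then r / d + 2 else r / d + 1 := fun k => by split_ifs <;> rfl
  simp_rw [card_fiber_finOfNat, h]
  rw [prod_fin_ite_lt (Nat.mod_lt _ (NeZero.pos d)).le, mul_comm]

lemma succ_div_pow_le (hd : 0 < d) :
    (r / d + 1) ^ d ≤ (r / d + 1) ^ (d - r % d) * (r / d + 2) ^ (r % d) := by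
  calc (r / d + 1) ^ d = (r / d + 1) ^ (d - r % d) * (r / d + 1) ^ (r % d) := by
        rw [← pow_add, Nat.sub_add_cancel (Nat.mod_lt r hd).le]
    _ ≤ _ := by gcongr; omega

lemma cast_div_lt_div_add_one (r d : ℕ) : (r : ℝ) / d < (r / d : ℕ) + 1 := by
  simpa [Nat.floor_div_eq_div] using Nat.lt_floor_add_one ((r : ℝ) / d)

lemma prod_eq_three_pow_mul_two_pow (hd : 0 < d) (hdr : d ≤ r) (hrd : r ≤ 2 * d) :
    (r / d + 1) ^ (d - r % d) * (r / d + 2) ^ (r % d) = 3 ^ (r - d) * 2 ^ (2 * d - r) := by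
  rcases hrd.eq_or_lt with rfl | hlt
  · simp [Nat.mul_div_cancel _ hd, show 2 * d - d = d by omega]
  · have hq : r / d = 1 := Nat.div_eq_of_lt_le (by omega) (by omega)
    have hρ : r % d = r - d := by rw [Nat.mod_eq_sub_mod hdr, Nat.mod_eq_of_lt (by omega)]
    rw [hq, hρ, show d - (r - d) = 2 * d - r by omega, mul_comm]

lemma three_halves_pow_mul_four_thirds_pow (hdr : d ≤ r) (hrd : r ≤ 2 * d) :
    (3 / 2 : ℝ) ^ r * (4 / 3) ^ d = 3 ^ (r - d) * 2 ^ (2 * d - r) := by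
  obtain ⟨m, rfl⟩ := Nat.exists_eq_add_of_le hdr
  obtain ⟨n, rfl⟩ := Nat.exists_eq_add_of_le (show m ≤ d by omega)
  rw [show m + n + m - (m + n) = m by omega, show 2 * (m + n) - (m + n + m) = n by omega]
  have h (x y : ℝ) : x ^ (m + n + m) * y ^ (m + n) = (x ^ 2 * y) ^ m * (x * y) ^ n := by ring
  rw [h]
  norm_num

end Numerics

theorem beta_lower' (r d : ℕ) (hd : 2 ≤ d) (hr : d ≤ r) :
    ((r / d + 1) ^ (d - r % d) * (r / d + 2) ^ (r % d) ≤ beta r d) ∧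
    (((r : ℝ) / (d : ℝ)) ^ d < (beta r d : ℝ)) ∧
    (r ≤ 2 * d → ((3 / 2 : ℝ)) ^ r * ((4 / 3 : ℝ)) ^ d ≤ (beta r d : ℝ)) := by
  have : NeZero d := ⟨by omega⟩
  have hbeta := prod_card_fiber_add_one_le_beta (surjective_finOfNat hr) (by rwa [Fintype.card_fin])
  rw [prod_card_fiber_finOfNat, Fintype.card_fin] at hbeta
  refine ⟨hbeta, ?_, fun h2d => ?_⟩
  · calc ((r : ℝ) / d) ^ d < ((r / d + 1 : ℕ) : ℝ) ^ d := by
          push_cast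
          exact pow_lt_pow_left₀ (cast_div_lt_div_add_one r d) (by positivity) (by omega)
      _ ≤ beta r d := by exact_mod_cast (succ_div_pow_le (by omega)).trans hbeta
  · rw [three_halves_pow_mul_four_thirds_pow hr h2d]
    exact_mod_cast prod_eq_three_pow_mul_two_pow (by omega) hr h2d ▸ hbeta
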